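/- arXiv:2409.16515 — 7 statements merged into one kernel-verified Lean document; each statement's English description precedes it below -/
import Mathlib

section
/- Let b, c be real numbers with c − b > 0 and c + 2b > 0. Then c > 0 and 2/(c − b) + 1/(c + 2b) ≥ 3/c, with equality if and only if b = 0. -/
/-!
Since `3c = 2(c - b) + (c + 2b)`, the number `c` is a weighted mean of the two eigenvalues, and
over the common denominator the excess `2/(c - b) + 1/(c + 2b) - 3/c` is `6b² / (c(c - b)(c + 2b))`,
which is nonnegative and vanishes exactly when `b = 0`.
-/

theorem two_div_sub_add_one_div_add_two_mul_sub_three_div {K : Type*} [Field K] {b c : K}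
    (hc : c ≠ 0) (h1 : c - b ≠ 0) (h2 : c + 2 * b ≠ 0) :
    2 / (c - b) + 1 / (c + 2 * b) - 3 / c = 6 * b ^ 2 / (c * (c - b) * (c + 2 * b)) := by
  field_simp
  ring

/-- If `c - b > 0` and `c + 2b > 0`, then `c > 0` and
`2/(c-b) + 1/(c+2b) ≥ 3/c`, with equality iff `b = 0`. -/
theorem trace_inv_circulant3_ge (b c : ℝ) (h1 : 0 < c - b) (h2 : 0 < c + 2 * b) :
    0 < c ∧ 2 / (c - b) + 1 / (c + 2 * b) ≥ 3 / c ∧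
      (2 / (c - b) + 1 / (c + 2 * b) = 3 / c ↔ b = 0) := by
  have hc : 0 < c := by linarith
  have hden : 0 < c * (c - b) * (c + 2 * b) := by positivity
  have hexcess := two_div_sub_add_one_div_add_two_mul_sub_three_div hc.ne' h1.ne' h2.ne'
  refine ⟨hc, ?_, ?_⟩
  · rw [ge_iff_le, ← sub_nonneg, hexcess]
    positivity
  · rw [← sub_eq_zero, hexcess, div_eq_zero_iff, or_iff_left hden.ne']
    simp
end

section
/- Let J₁, J₂, J₃ be Hermitian d×d complex matrices, let ψ ∈ ℂ^d be a unit vector, and suppose there is a unitary d×d matrix C with Cψ = ψ, C†J₁C = J₂, C†J₂C = J₃, and C†J₃C = J₁. Define the real 3×3 matrix F by F_{il} = 4(Re⟨J_iJ_l⟩_ψ − ⟨J_i⟩_ψ⟨J_l⟩_ψ). Then F_{11} = F_{22} = F_{33}, and F_{12} = F_{13} = F_{23} = F_{21} = F_{31} = F_{32}; that is, F is a symmetric circulant matrix of the form !![c,b,b; b,c,b; b,b,c] for some real numbers b, c. -/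
open Matrix

/-- The expectation value `⟨A⟩_ψ = ⟨ψ, A ψ⟩` of a matrix `A` in the state `ψ`. -/
noncomputable def expVal {d : ℕ} (ψ : Fin d → ℂ) (A : Matrix (Fin d) (Fin d) ℂ) : ℂ :=
  star ψ ⬝ᵥ (A *ᵥ ψ)

lemma expVal_conj {d : ℕ} (ψ : Fin d → ℂ) (C : Matrix (Fin d) (Fin d) ℂ)
    (hCψ : C *ᵥ ψ = ψ) (A : Matrix (Fin d) (Fin d) ℂ) :
    expVal ψ (Cᴴ * A * C) = expVal ψ A := by
  have hstar : star ψ ᵥ* Cᴴ = star ψ := by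
    rw [← Matrix.star_mulVec, hCψ]
  rw [expVal, expVal, ← Matrix.mulVec_mulVec, ← Matrix.mulVec_mulVec, hCψ,
    Matrix.dotProduct_mulVec, hstar]

lemma expVal_herm {d : ℕ} (ψ : Fin d → ℂ) (A : Matrix (Fin d) (Fin d) ℂ) :
    expVal ψ (Aᴴ) = star (expVal ψ A) := by
  rw [expVal, expVal, Matrix.star_dotProduct, Matrix.star_mulVec,
    Matrix.conjTranspose_conjTranspose, ← Matrix.dotProduct_mulVec]

/-- If `ψ` is a unit vector fixed by a unitary `C` that cyclically permutes the three
Hermitian generators `J₁, J₂, J₃`, then the quantum Fisher information matrix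
`F_{il} = 4(Re⟨J_i J_l⟩ − ⟨J_i⟩⟨J_l⟩)` is a symmetric circulant matrix
`!![c,b,b; b,c,b; b,b,c]`. -/
theorem qfim_circulant_of_cyclic_symmetry {d : ℕ}
    (J : Fin 3 → Matrix (Fin d) (Fin d) ℂ) (hJ : ∀ i, (J i).IsHermitian)
    (ψ : Fin d → ℂ) (hψ : star ψ ⬝ᵥ ψ = 1)
    (C : Matrix (Fin d) (Fin d) ℂ) (hC : C ∈ Matrix.unitaryGroup (Fin d) ℂ)
    (hCψ : C *ᵥ ψ = ψ)
    (hC1 : Cᴴ * J 0 * C = J 1) (hC2 : Cᴴ * J 1 * C = J 2) (hC3 : Cᴴ * J 2 * C = J 0)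
    (F : Matrix (Fin 3) (Fin 3) ℝ)
    (hF : ∀ i l, F i l =
      4 * ((expVal ψ (J i * J l)).re - (expVal ψ (J i)).re * (expVal ψ (J l)).re)) :
    ∃ b c : ℝ, F = !![c, b, b; b, c, b; b, b, c] := by
  have hCC : C * Cᴴ = 1 := (Matrix.mem_unitaryGroup_iff.mp hC)
  -- single-operator expectations
  have e1 : expVal ψ (J 1) = expVal ψ (J 0) := by rw [← hC1, expVal_conj ψ C hCψ]
  have e2 : expVal ψ (J 2) = expVal ψ (J 1) := by rw [← hC2, expVal_conj ψ C hCψ]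
  -- product conjugation
  have hprod : ∀ A B : Matrix (Fin d) (Fin d) ℂ,
      (Cᴴ * A * C) * (Cᴴ * B * C) = Cᴴ * (A * B) * C := by
    intro A B
    have h : C * (Cᴴ * (B * C)) = B * C := by
      rw [← Matrix.mul_assoc, hCC, Matrix.one_mul]
    simp only [Matrix.mul_assoc, h]
  have ep : ∀ i l i' l' : Fin 3, Cᴴ * J i * C = J i' → Cᴴ * J l * C = J l' →
      expVal ψ (J i' * J l') = expVal ψ (J i * J l) := by
    intro i l i' l' hi hl
    rw [← hi, ← hl, hprod, expVal_conj ψ C hCψ]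
  have p01 : expVal ψ (J 1 * J 2) = expVal ψ (J 0 * J 1) := ep 0 1 1 2 hC1 hC2
  have p12 : expVal ψ (J 2 * J 0) = expVal ψ (J 1 * J 2) := ep 1 2 2 0 hC2 hC3
  have p00 : expVal ψ (J 1 * J 1) = expVal ψ (J 0 * J 0) := ep 0 0 1 1 hC1 hC1
  have p11 : expVal ψ (J 2 * J 2) = expVal ψ (J 1 * J 1) := ep 1 1 2 2 hC2 hC2
  -- hermitian swap: re of ⟨J i J l⟩ = re of ⟨J l J i⟩
  have hsw : ∀ i l : Fin 3, (expVal ψ (J i * J l)).re = (expVal ψ (J l * J i)).re := by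
    intro i l
    have h : (J l * J i)ᴴ = J i * J l := by
      rw [Matrix.conjTranspose_mul, (hJ i).eq, (hJ l).eq]
    rw [← h, expVal_herm]
    simp
  have h11 : F 1 1 = F 0 0 := by rw [hF, hF]; simp only [p00, e1]
  have h22 : F 2 2 = F 0 0 := by rw [hF, hF]; simp only [p11, p00, e2, e1]
  have h02 : F 0 2 = F 0 1 := by rw [hF, hF]; simp only [hsw 0 2, p12, p01, e2, e1]
  have h12 : F 1 2 = F 0 1 := by rw [hF, hF]; simp only [p01, e2, e1]
  have h10 : F 1 0 = F 0 1 := by rw [hF, hF]; simp only [hsw 1 0, e1]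
  have h20 : F 2 0 = F 0 1 := by rw [hF, hF]; simp only [p12, p01, e2, e1]
  have h21 : F 2 1 = F 0 1 := by rw [hF, hF]; simp only [hsw 2 1, p01, e2, e1]
  refine ⟨F 0 1, F 0 0, ?_⟩
  rw [Matrix.eta_fin_three F, h11, h22, h02, h12, h10, h20, h21]
  simp
end

section
/- Let N be a positive natural number, let J₁, J₂, J₃ be Hermitian complex matrices (of some size d×d) with J₁² + J₂² + J₃² = (N/2)·(N/2 + 1)·I, and let ψ ∈ ℂ^d be a unit vector. Define the real 3×3 matrix F by F_{il} = 4(Re⟨J_iJ_l⟩_ψ − ⟨J_i⟩_ψ⟨J_l⟩_ψ), and assume F is positive definite. Then tr(F⁻¹) ≥ 9/(N² + 2N). -/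
/-! The Fisher matrix of a pure state has trace `4 ∑ Var(Jᵢ) ≤ 4 ∑ ⟨Jᵢ²⟩`, and by the Casimir
identity the latter equals `N² + 2N`. On the other hand, for any positive definite `3 × 3`
matrix, Cauchy–Schwarz on the eigenvalues gives `9 ≤ tr F · tr F⁻¹`. -/

open Matrix

namespace Matrix

open scoped ComplexOrder

variable {n 𝕜 : Type*} [Fintype n] [DecidableEq n] [RCLike 𝕜]

theorem trace_conjStarAlgAut (U : unitary (Matrix n n 𝕜)) (A : Matrix n n 𝕜) :
    (Unitary.conjStarAlgAut 𝕜 _ U A).trace = A.trace := by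
  rw [Unitary.conjStarAlgAut_apply, trace_mul_cycle, Unitary.coe_star_mul_self, one_mul]

theorem PosDef.inv_eq_conjStarAlgAut {A : Matrix n n 𝕜} (hA : A.PosDef) :
    A⁻¹ = Unitary.conjStarAlgAut 𝕜 _ hA.1.eigenvectorUnitary
      (diagonal (RCLike.ofReal ∘ hA.1.eigenvalues⁻¹)) := by
  refine inv_eq_left_inv ?_
  conv_lhs => enter [2]; rw [hA.1.spectral_theorem]
  rw [← map_mul, diagonal_mul_diagonal, ← map_one (Unitary.conjStarAlgAut 𝕜 _ _), ← diagonal_one]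
  congr 2
  ext i
  simp [(hA.eigenvalues_pos i).ne']

theorem PosDef.trace_inv_eq_sum_inv_eigenvalues {A : Matrix n n 𝕜} (hA : A.PosDef) :
    A⁻¹.trace = ∑ i, ((hA.1.eigenvalues i)⁻¹ : 𝕜) := by
  rw [hA.inv_eq_conjStarAlgAut, trace_conjStarAlgAut, trace_diagonal]
  simp

theorem PosDef.sq_card_le_trace_mul_trace_inv {A : Matrix n n ℝ} (hA : A.PosDef) :
    (Fintype.card n : ℝ) ^ 2 ≤ A.trace * A⁻¹.trace := by
  have hpos := hA.eigenvalues_pos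
  rw [hA.1.trace_eq_sum_eigenvalues, hA.trace_inv_eq_sum_inv_eigenvalues]
  simpa using Finset.sum_sq_le_sum_mul_sum_of_sq_le_mul (r := 1) Finset.univ
    (fun i _ ↦ (hpos i).le) (fun i _ ↦ (inv_pos.2 (hpos i)).le)
    (fun i _ ↦ by simp [(hpos i).ne'])

end Matrix

section ExpVal

variable {d : ℕ} {ψ : Fin d → ℂ}

theorem expVal_sum {ι : Type*} (s : Finset ι) (A : ι → Matrix (Fin d) (Fin d) ℂ) :
    expVal ψ (∑ i ∈ s, A i) = ∑ i ∈ s, expVal ψ (A i) := by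
  simp [expVal, sum_mulVec, dotProduct_sum]

theorem expVal_smul_one (hψ : star ψ ⬝ᵥ ψ = 1) (c : ℂ) :
    expVal ψ (c • (1 : Matrix (Fin d) (Fin d) ℂ)) = c := by
  simp [expVal, smul_mulVec, dotProduct_smul, hψ]

theorem sum_variance_le_of_sum_sq_eq {ι : Type*} [Fintype ι]
    (J : ι → Matrix (Fin d) (Fin d) ℂ) (c : ℝ) (hJ : ∑ i, J i ^ 2 = (c : ℂ) • 1)
    (hψ : star ψ ⬝ᵥ ψ = 1) :
    ∑ i, ((expVal ψ (J i * J i)).re - (expVal ψ (J i)).re ^ 2) ≤ c := by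
  have hsum : ∑ i, (expVal ψ (J i * J i)).re = c := by
    simpa [← pow_two, ← Complex.re_sum, ← expVal_sum, hJ] using
      congrArg Complex.re (expVal_smul_one hψ c)
  rw [Finset.sum_sub_distrib, hsum, sub_le_self_iff]
  exact Finset.sum_nonneg fun i _ ↦ sq_nonneg _

end ExpVal

theorem qcrb_lower_bound_general {d : ℕ} (N : ℕ)
    (J : Fin 3 → Matrix (Fin d) (Fin d) ℂ)
    (hCas : J 0 ^ 2 + J 1 ^ 2 + J 2 ^ 2
      = ((((N : ℝ) / 2) * ((N : ℝ) / 2 + 1) : ℝ) : ℂ) • (1 : Matrix (Fin d) (Fin d) ℂ))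
    (ψ : Fin d → ℂ) (hψ : star ψ ⬝ᵥ ψ = 1)
    (F : Matrix (Fin 3) (Fin 3) ℝ)
    (hF : ∀ i l, F i l =
      4 * ((expVal ψ (J i * J l)).re - (expVal ψ (J i)).re * (expVal ψ (J l)).re))
    (hFpd : F.PosDef) :
    (F⁻¹).trace ≥ 9 / ((N : ℝ) ^ 2 + 2 * N) := by
  have htrace : F.trace ≤ (N : ℝ) ^ 2 + 2 * N := by
    have hvar := sum_variance_le_of_sum_sq_eq J _ (by rwa [Fin.sum_univ_three]) hψ
    calc F.trace = 4 * ∑ i, ((expVal ψ (J i * J i)).re - (expVal ψ (J i)).re ^ 2) := by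
          simp only [trace, diag, hF, Finset.mul_sum, sq]
      _ ≤ (N : ℝ) ^ 2 + 2 * N := by linarith
  have hcs : (9 : ℝ) ≤ F.trace * F⁻¹.trace := by
    simpa [show (9 : ℝ) = 3 ^ 2 by norm_num] using hFpd.sq_card_le_trace_mul_trace_inv
  have hNpos : 0 < (N : ℝ) ^ 2 + 2 * N := hFpd.trace_pos.trans_le htrace
  rw [ge_iff_le, div_le_iff₀' hNpos]
  calc (9 : ℝ) ≤ F.trace * F⁻¹.trace := hcs
    _ ≤ ((N : ℝ) ^ 2 + 2 * N) * F⁻¹.trace := by gcongr; exact hFpd.inv.trace_pos.le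

/-- If the Hermitian generators satisfy the spin-`N/2` Casimir identity
`J₁² + J₂² + J₃² = (N/2)(N/2+1)·I` and `ψ` is a unit vector, then the quantum Fisher
information matrix `F_{il} = 4(Re⟨J_i J_l⟩ − ⟨J_i⟩⟨J_l⟩)`, assumed positive definite,
satisfies `tr(F⁻¹) ≥ 9/(N² + 2N)`. -/
theorem qcrb_lower_bound {d : ℕ} (N : ℕ) (hN : 0 < N)
    (J : Fin 3 → Matrix (Fin d) (Fin d) ℂ) (hJ : ∀ i, (J i).IsHermitian)
    (hCas : J 0 ^ 2 + J 1 ^ 2 + J 2 ^ 2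
      = ((((N : ℝ) / 2) * ((N : ℝ) / 2 + 1) : ℝ) : ℂ) • (1 : Matrix (Fin d) (Fin d) ℂ))
    (ψ : Fin d → ℂ) (hψ : star ψ ⬝ᵥ ψ = 1)
    (F : Matrix (Fin 3) (Fin 3) ℝ)
    (hF : ∀ i l, F i l =
      4 * ((expVal ψ (J i * J l)).re - (expVal ψ (J i)).re * (expVal ψ (J l)).re))
    (hFpd : F.PosDef) :
    (F⁻¹).trace ≥ 9 / ((N : ℝ) ^ 2 + 2 * N) :=
  qcrb_lower_bound_general N J hCas ψ hψ F hF hFpd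
end

section
/- Let σ₁ = !![0,1; 1,0], σ₂ = !![0,−i; i,0], σ₃ = !![1,0; 0,−1] and let V = exp(i(π/3)(σ₁ + σ₂ + σ₃)/√3) (matrix exponential of a 2×2 complex matrix). Then ⟨e₀, V e₀⟩ = (1+i)/2, where e₀ = (1,0); consequently ⟨e₀^{⊗N}, V^{⊗N} e₀^{⊗N}⟩ = ((1+i)/2)^N = 2^{−N/2}·exp(iπN/4) for every natural number N, and exp(iπN/4) = 1 if and only if N ≡ 0 (mod 8). -/
/-! Since `(σ₁ + σ₂ + σ₃)² = 3`, the matrix `n·σ` with `n = (1,1,1)/√3` squares to the identity, so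
`exp(iθ n·σ) = cos θ + i sin θ n·σ`; at `θ = π/3` its `(0,0)` entry is `1/2 + i/2`. The matrix element
of `V^{⊗N}` between product vectors factorises over the `N` tensor factors, and
`(1 + i)/2 = 2^{-1/2} ζ` with `ζ = exp(2πi/8)` a primitive eighth root of unity. -/

open Matrix

/-- The `N`-fold Kronecker (tensor) power of a `2×2` matrix, as a matrix indexed by
`Fin N → Fin 2`. -/
noncomputable def kronPow (N : ℕ) (U : Matrix (Fin 2) (Fin 2) ℂ) :
    Matrix (Fin N → Fin 2) (Fin N → Fin 2) ℂ :=
  fun x y => ∏ i, U (x i) (y i)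

/-- The `N`-fold tensor power of a vector in `ℂ²`. -/
noncomputable def vecPow (N : ℕ) (v : Fin 2 → ℂ) : (Fin N → Fin 2) → ℂ :=
  fun x => ∏ i, v (x i)

open Complex
open scoped Real

theorem NormedSpace.exp_smul_of_mul_self_eq_one {𝔸 : Type*} [NormedRing 𝔸] [NormedAlgebra ℂ 𝔸]
    [CompleteSpace 𝔸] {a : 𝔸} (ha : a * a = 1) (z : ℂ) :
    NormedSpace.exp (z • a) = cosh z • (1 : 𝔸) + sinh z • a := by
  have hpow (n : ℕ) : a ^ (2 * n) = 1 := by rw [pow_mul, sq, ha, one_pow]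
  refine (NormedSpace.exp_series_hasSum_exp' (𝕂 := ℂ) (z • a)).unique ?_
  refine HasSum.even_add_odd ?_ ?_
  · convert (hasSum_cosh z).smul_const (1 : 𝔸) using 2 with n
    rw [smul_pow, hpow, smul_smul, div_eq_inv_mul]
  · convert (hasSum_sinh z).smul_const a using 2 with n
    rw [smul_pow, pow_succ a, hpow, one_mul, smul_smul, div_eq_inv_mul]

theorem NormedSpace.exp_smul_of_mul_self_eq_sq_smul_one {𝔸 : Type*} [NormedRing 𝔸]
    [NormedAlgebra ℂ 𝔸] [CompleteSpace 𝔸] {a : 𝔸} {r : ℂ} (hr : r ≠ 0)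
    (ha : a * a = r ^ 2 • (1 : 𝔸)) (z : ℂ) :
    NormedSpace.exp (z • a) = cosh (z * r) • (1 : 𝔸) + (sinh (z * r) / r) • a := by
  have hunit : (r⁻¹ • a) * (r⁻¹ • a) = 1 := by
    have : r⁻¹ * r⁻¹ * r ^ 2 = 1 := by field_simp
    rw [smul_mul_smul_comm, ha, smul_smul, this, one_smul]
  have hscale : z • a = (z * r) • (r⁻¹ • a) := by rw [smul_smul, mul_inv_cancel_right₀ hr]
  rw [hscale, exp_smul_of_mul_self_eq_one hunit, smul_smul, div_eq_mul_inv]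

section

attribute [local instance] Matrix.linftyOpNormedRing Matrix.linftyOpNormedAlgebra

theorem Matrix.exp_smul_of_mul_self_eq_sq_smul_one {n : Type*} [Fintype n] [DecidableEq n]
    {A : Matrix n n ℂ} {r : ℂ} (hr : r ≠ 0) (hA : A * A = r ^ 2 • (1 : Matrix n n ℂ)) (z : ℂ) :
    NormedSpace.exp (z • A) = cosh (z * r) • (1 : Matrix n n ℂ) + (sinh (z * r) / r) • A :=
  NormedSpace.exp_smul_of_mul_self_eq_sq_smul_one hr hA z

end

theorem pauli_combination_mul_self (a b c : ℂ) :
    (a • !![0, 1; 1, 0] + b • !![0, -I; I, 0] + c • !![1, 0; 0, -1] : Matrix (Fin 2) (Fin 2) ℂ) *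
      (a • !![0, 1; 1, 0] + b • !![0, -I; I, 0] + c • !![1, 0; 0, -1]) =
      (a ^ 2 + b ^ 2 + c ^ 2) • (1 : Matrix (Fin 2) (Fin 2) ℂ) := by
  ext i j
  fin_cases i <;> fin_cases j <;> simp [Matrix.mul_apply, Fin.sum_univ_two] <;> grind [I_sq]

theorem dotProduct_kronPow_mulVec_vecPow (N : ℕ) (U : Matrix (Fin 2) (Fin 2) ℂ)
    (v w : Fin 2 → ℂ) :
    star (vecPow N v) ⬝ᵥ (kronPow N U *ᵥ vecPow N w) = (star v ⬝ᵥ (U *ᵥ w)) ^ N := by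
  rw [dotProduct, dotProduct, Fintype.sum_pow]
  refine Fintype.sum_congr _ _ fun x => ?_
  simp only [Pi.star_apply, vecPow, star_prod, mulVec, dotProduct, kronPow,
    Finset.prod_mul_distrib, Fintype.prod_sum]

theorem Complex.exp_I_mul_pi_mul_div_four_eq_pow (N : ℕ) :
    exp (I * π * N / 4) = exp (2 * π * I / (8 : ℕ)) ^ N := by
  rw [← exp_nat_mul]; congr 1; push_cast; ring

theorem Complex.one_add_I_div_two_eq_inv_sqrt_two_mul_exp :
    (1 + I) / 2 = (Real.sqrt 2 : ℂ)⁻¹ * exp (2 * π * I / (8 : ℕ)) := by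
  rw [show 2 * π * I / (8 : ℕ) = (π / 4 : ℝ) * I by push_cast; ring, exp_mul_I, ← ofReal_cos,
    ← ofReal_sin, Real.cos_pi_div_four, Real.sin_pi_div_four]
  field_simp
  push_cast
  ring

/-- For `V = exp(i(π/3)(σ₁+σ₂+σ₃)/√3)` one has `⟨e₀, V e₀⟩ = (1+i)/2`; consequently
`⟨e₀^{⊗N}, V^{⊗N} e₀^{⊗N}⟩ = ((1+i)/2)^N = 2^{−N/2}·exp(iπN/4)` for all `N`, and
`exp(iπN/4) = 1` iff `N ≡ 0 (mod 8)`. -/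
theorem tetrahedral_generator_Gone_matrix_element
    (σ₁ σ₂ σ₃ : Matrix (Fin 2) (Fin 2) ℂ)
    (hσ₁ : σ₁ = !![0, 1; 1, 0]) (hσ₂ : σ₂ = !![0, -Complex.I; Complex.I, 0])
    (hσ₃ : σ₃ = !![1, 0; 0, -1])
    (V : Matrix (Fin 2) (Fin 2) ℂ)
    (hV : V = NormedSpace.exp
      ((Complex.I * ((Real.pi : ℂ) / 3) / (Real.sqrt 3 : ℂ)) • (σ₁ + σ₂ + σ₃)))
    (e₀ : Fin 2 → ℂ) (he₀ : e₀ = ![1, 0]) :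
    star e₀ ⬝ᵥ (V *ᵥ e₀) = (1 + Complex.I) / 2 ∧
    ∀ N : ℕ,
      star (vecPow N e₀) ⬝ᵥ (kronPow N V *ᵥ vecPow N e₀) = ((1 + Complex.I) / 2) ^ N ∧
      ((1 + Complex.I) / 2) ^ N
        = ((Real.sqrt 2 : ℂ))⁻¹ ^ N * Complex.exp (Complex.I * Real.pi * N / 4) ∧
      (Complex.exp (Complex.I * Real.pi * N / 4) = 1 ↔ N % 8 = 0) := by
  have hsqrt3 : (Real.sqrt 3 : ℂ) ≠ 0 := by simp
  have hS : (σ₁ + σ₂ + σ₃) * (σ₁ + σ₂ + σ₃) = (Real.sqrt 3 : ℂ) ^ 2 • 1 := by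
    have := pauli_combination_mul_self 1 1 1
    rw [one_smul, one_smul, one_smul] at this
    rw [hσ₁, hσ₂, hσ₃, this, ← ofReal_pow, Real.sq_sqrt (by norm_num)]
    norm_num
  have hangle : I * (π / 3) / (Real.sqrt 3 : ℂ) * (Real.sqrt 3 : ℂ) = (π / 3 : ℝ) * I := by
    field_simp; push_cast; ring
  have hS00 : (σ₁ + σ₂ + σ₃) 0 0 = 1 := by simp [hσ₁, hσ₂, hσ₃]
  have hV00 : V 0 0 = (1 + I) / 2 := by
    rw [hV, Matrix.exp_smul_of_mul_self_eq_sq_smul_one hsqrt3 hS, hangle, cosh_mul_I, sinh_mul_I,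
      ← ofReal_cos, ← ofReal_sin, Real.cos_pi_div_three, Real.sin_pi_div_three, Matrix.add_apply,
      Matrix.smul_apply, Matrix.smul_apply, one_apply_eq, hS00]
    push_cast [smul_eq_mul]
    field_simp
  have hvec : star e₀ ⬝ᵥ (V *ᵥ e₀) = (1 + I) / 2 := by
    simp [he₀, dotProduct, mulVec, hV00]
  refine ⟨hvec, fun N => ⟨?_, ?_, ?_⟩⟩
  · rw [dotProduct_kronPow_mulVec_vecPow, hvec]
  · rw [Complex.exp_I_mul_pi_mul_div_four_eq_pow, Complex.one_add_I_div_two_eq_inv_sqrt_two_mul_exp, mul_pow]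
  · rw [Complex.exp_I_mul_pi_mul_div_four_eq_pow, (isPrimitiveRoot_exp 8 (by norm_num)).pow_eq_one_iff_dvd,
      Nat.dvd_iff_mod_eq_zero]
end

section
/- Let J₁, J₂, J₃ be d×d complex matrices satisfying J_iJ_j − J_jJ_i = i·Σ_k ε_{ijk}J_k, and let θ ∈ ℝ³ with θ ≠ 0; write ‖θ‖ for the Euclidean norm, θ·J := θ₁J₁+θ₂J₂+θ₃J₃, and e_j for the j-th standard basis vector of ℝ³. Then for each j = 1,2,3: ∫₀¹ exp(iα(θ·J)) J_j exp(−iα(θ·J)) dα = (sin‖θ‖/‖θ‖)·J_j + (1 − sin‖θ‖/‖θ‖)·(θ_j/‖θ‖²)·(θ·J) + (2 sin²(‖θ‖/2)/‖θ‖²)·((e_j × θ)·J), where e_j × θ is the cross product. -/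
/-! `exp (iαθ·J) J_j exp (-iαθ·J)` solves `F' = [iθ·J, F]`, and the su(2) relations turn
`[iθ·J, u·J]` into `(u × θ)·J`. Hence the conjugated generator is `(R_α e_j)·J`, where `R_α v` is
Rodrigues' rotation of `v` about the axis `θ` by the angle `α‖θ‖`, the solution of
`v' = v × θ`. Integrating Rodrigues' formula over `α ∈ [0, 1]` gives the three terms. -/

open Matrix

attribute [local instance] Matrix.frobeniusNormedAddCommGroup Matrix.frobeniusNormedSpace

/-- The Levi-Civita symbol on `Fin 3`: `ε_{ijk} = (j−i)(k−j)(k−i)/2`. -/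
noncomputable def levi (i j k : Fin 3) : ℝ :=
  ((((j : ℤ) - (i : ℤ)) * ((k : ℤ) - (j : ℤ)) * ((k : ℤ) - (i : ℤ)) : ℤ) : ℝ) / 2

/-- `u·J := u₁J₁ + u₂J₂ + u₃J₃` for a real vector `u` and matrices `J`. -/
noncomputable def dotJ {d : ℕ} (J : Fin 3 → Matrix (Fin d) (Fin d) ℂ) (u : Fin 3 → ℝ) :
    Matrix (Fin d) (Fin d) ℂ :=
  ∑ i, (u i : ℂ) • J i

/-- The Euclidean norm on `ℝ³`. -/
noncomputable def enorm' (u : Fin 3 → ℝ) : ℝ := Real.sqrt (∑ i, u i ^ 2)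

attribute [local instance] Matrix.frobeniusNormedRing Matrix.frobeniusNormedAlgebra

open NormedSpace

theorem exp_smul_mul_mul_exp_neg_smul_of_hasDerivAt {𝔸 : Type*} [NormedRing 𝔸]
    [NormedAlgebra ℝ 𝔸] [CompleteSpace 𝔸] (X : 𝔸) {F : ℝ → 𝔸}
    (hF : ∀ t, HasDerivAt F (X * F t - F t * X) t) (t : ℝ) :
    exp (t • X) * F 0 * exp ((-t) • X) = F t := by
  let +nondep : NormedAlgebra ℚ 𝔸 := .restrictScalars ℚ ℝ 𝔸
  have hinv : exp (t • X) * exp ((-t) • X) = 1 := by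
    rw [← NormedSpace.exp_add_of_commute ((Commute.refl X).smul_left _ |>.smul_right _),
      ← add_smul, add_neg_cancel, zero_smul, exp_zero]
  set g : ℝ → 𝔸 := fun s => exp ((-s) • X) * F s * exp (s • X)
  have hg : ∀ s, HasDerivAt g 0 s := by
    intro s
    have hm : HasDerivAt (fun s : ℝ => exp ((-s) • X)) (exp ((-s) • X) * -X) s := by
      simpa only [neg_smul, smul_neg] using hasDerivAt_exp_smul_const (-X) s
    refine ((hm.mul (hF s)).mul (hasDerivAt_exp_smul_const' X s)).congr_deriv ?_
    simp only [Pi.mul_apply]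
    noncomm_ring
  have hconst : g t = g 0 :=
    is_const_of_deriv_eq_zero (fun s => (hg s).differentiableAt) (fun s => (hg s).deriv) t 0
  have hg0 : g 0 = F 0 := by simp [g]
  calc exp (t • X) * F 0 * exp ((-t) • X) = exp (t • X) * g t * exp ((-t) • X) := by
        rw [hconst, hg0]
    _ = (exp (t • X) * exp ((-t) • X)) * F t * (exp (t • X) * exp ((-t) • X)) := by
        simp only [g, mul_assoc]
    _ = F t := by rw [hinv, one_mul, mul_one]

theorem enorm'_sq (u : Fin 3 → ℝ) : enorm' u ^ 2 = u ⬝ᵥ u := by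
  rw [enorm', Real.sq_sqrt (by positivity), dotProduct]
  simp only [sq]

theorem enorm'_ne_zero {u : Fin 3 → ℝ} (hu : u ≠ 0) : enorm' u ≠ 0 := by
  rw [← pow_ne_zero_iff two_ne_zero, enorm'_sq]
  exact fun h => hu (dotProduct_self_eq_zero.mp h)

noncomputable def rodrigues (θ : Fin 3 → ℝ) (α : ℝ) (v : Fin 3 → ℝ) : Fin 3 → ℝ :=
  Real.cos (enorm' θ * α) • v
    + ((1 - Real.cos (enorm' θ * α)) * (θ ⬝ᵥ v) / enorm' θ ^ 2) • θ
    + (Real.sin (enorm' θ * α) / enorm' θ) • (v ⨯₃ θ)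

@[simp]
theorem rodrigues_zero (θ v : Fin 3 → ℝ) : rodrigues θ 0 v = v := by
  simp [rodrigues]

theorem hasDerivAt_rodrigues {θ : Fin 3 → ℝ} (hθ : θ ≠ 0) (v : Fin 3 → ℝ) (α : ℝ) :
    HasDerivAt (fun α => rodrigues θ α v) (rodrigues θ α v ⨯₃ θ) α := by
  have hn : enorm' θ ≠ 0 := enorm'_ne_zero hθ
  have hlin := (hasDerivAt_id α).const_mul (enorm' θ)
  simp only [id, mul_one] at hlin
  refine (((hlin.cos.smul_const v).add
      ((((hlin.cos.const_sub 1).mul_const (θ ⬝ᵥ v)).div_const _).smul_const θ)).add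
      ((hlin.sin.div_const _).smul_const (v ⨯₃ θ))).congr_deriv ?_
  simp only [rodrigues, map_add, map_smul, LinearMap.add_apply, LinearMap.smul_apply,
    cross_self, smul_zero, add_zero, cross_cross_eq_smul_sub_smul, ← enorm'_sq, dotProduct_comm v θ]
  match_scalars <;> field_simp

theorem integral_cos_mul {c : ℝ} (hc : c ≠ 0) :
    ∫ α in (0 : ℝ)..1, Real.cos (c * α) = Real.sin c / c := by
  rw [intervalIntegral.integral_comp_mul_left Real.cos hc]
  simp [integral_cos, div_eq_inv_mul]

theorem integral_sin_mul {c : ℝ} (hc : c ≠ 0) :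
    ∫ α in (0 : ℝ)..1, Real.sin (c * α) = 2 * Real.sin (c / 2) ^ 2 / c := by
  rw [intervalIntegral.integral_comp_mul_left Real.sin hc, integral_sin, Real.sin_sq_eq_half_sub,
    mul_div_cancel₀ _ two_ne_zero]
  simp only [mul_zero, mul_one, Real.cos_zero, smul_eq_mul]
  ring

theorem integral_rodrigues {θ : Fin 3 → ℝ} (hθ : θ ≠ 0) (v : Fin 3 → ℝ) :
    ∫ α in (0 : ℝ)..1, rodrigues θ α v
      = (Real.sin (enorm' θ) / enorm' θ) • v
        + ((1 - Real.sin (enorm' θ) / enorm' θ) * (θ ⬝ᵥ v / enorm' θ ^ 2)) • θ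
        + (2 * Real.sin (enorm' θ / 2) ^ 2 / enorm' θ ^ 2) • (v ⨯₃ θ) := by
  have hn := enorm'_ne_zero hθ
  unfold rodrigues
  rw [intervalIntegral.integral_add, intervalIntegral.integral_add,
    intervalIntegral.integral_smul_const, intervalIntegral.integral_smul_const,
    intervalIntegral.integral_smul_const, intervalIntegral.integral_div,
    intervalIntegral.integral_div, intervalIntegral.integral_mul_const,
    intervalIntegral.integral_sub, integral_cos_mul hn, integral_sin_mul hn, integral_one, sub_zero]
  · match_scalars <;> ring
  all_goals exact Continuous.intervalIntegrable (by fun_prop) _ _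

theorem cross_apply_eq_sum_levi (u v : Fin 3 → ℝ) (l : Fin 3) :
    (u ⨯₃ v) l = ∑ i, ∑ k, levi i k l * u i * v k := by
  fin_cases l <;> simp [cross_apply, Fin.sum_univ_three, levi] <;> ring

section dotJ

variable {d : ℕ} (J : Fin 3 → Matrix (Fin d) (Fin d) ℂ)

theorem dotJ_mul_sub_mul_dotJ
    (hcomm : ∀ i j, J i * J j - J j * J i = Complex.I • ∑ k, (levi i j k : ℂ) • J k)
    (u v : Fin 3 → ℝ) :
    dotJ J u * dotJ J v - dotJ J v * dotJ J u = Complex.I • dotJ J (u ⨯₃ v) := by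
  calc dotJ J u * dotJ J v - dotJ J v * dotJ J u
      = ∑ i, ∑ k, ((u i * v k : ℝ) : ℂ) • (J i * J k - J k * J i) := by
        simp only [dotJ, Finset.sum_mul, Finset.mul_sum, smul_mul_smul_comm, smul_sub,
          Finset.sum_sub_distrib, Complex.ofReal_mul]
        rw [Finset.sum_comm]
        simp only [mul_comm (v _ : ℂ)]
    _ = Complex.I • ∑ i, ∑ k, ∑ l, ((levi i k l * u i * v k : ℝ) : ℂ) • J l := by
        simp only [hcomm, Finset.smul_sum, smul_smul]
        refine Finset.sum_congr rfl fun i _ => Finset.sum_congr rfl fun k _ =>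
          Finset.sum_congr rfl fun l _ => ?_
        push_cast
        ring_nf
    _ = Complex.I • dotJ J (u ⨯₃ v) := by
        rw [Finset.sum_comm_cycle]
        simp only [dotJ, cross_apply_eq_sum_levi, Complex.ofReal_sum, Finset.sum_smul]

noncomputable def dotJCLM : (Fin 3 → ℝ) →L[ℝ] Matrix (Fin d) (Fin d) ℂ :=
  LinearMap.toContinuousLinearMap (Fintype.linearCombination ℝ J)

theorem dotJCLM_apply (u : Fin 3 → ℝ) : dotJCLM J u = dotJ J u := by
  simp [dotJCLM, Fintype.linearCombination_apply, dotJ, Complex.coe_smul]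

theorem I_smul_dotJ_mul_sub_mul_dotJ
    (hcomm : ∀ i j, J i * J j - J j * J i = Complex.I • ∑ k, (levi i j k : ℂ) • J k)
    (u v : Fin 3 → ℝ) :
    (Complex.I • dotJ J u) * dotJ J v - dotJ J v * (Complex.I • dotJ J u) = dotJ J (v ⨯₃ u) := by
  rw [smul_mul_assoc, mul_smul_comm, ← smul_sub, dotJ_mul_sub_mul_dotJ J hcomm, smul_smul,
    Complex.I_mul_I, neg_one_smul, ← dotJCLM_apply, ← dotJCLM_apply, ← map_neg, cross_anticomm]

theorem dotJ_single (j : Fin 3) : dotJ J (Pi.single j 1) = J j := by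
  simp [dotJ, Pi.single_apply]

end dotJ

/-- For matrices satisfying the su(2) commutation relations and `θ ≠ 0`,
`∫₀¹ exp(iα θ·J) J_j exp(−iα θ·J) dα = (sin‖θ‖/‖θ‖)J_j
  + (1 − sin‖θ‖/‖θ‖)(θ_j/‖θ‖²)(θ·J) + (2sin²(‖θ‖/2)/‖θ‖²)((e_j × θ)·J)`. -/
theorem su2_sld_integral {d : ℕ}
    (J : Fin 3 → Matrix (Fin d) (Fin d) ℂ)
    (hcomm : ∀ i j, J i * J j - J j * J i = Complex.I • ∑ k, (levi i j k : ℂ) • J k)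
    (θ : Fin 3 → ℝ) (hθ : θ ≠ 0) (j : Fin 3) :
    (∫ α in (0 : ℝ)..1,
        NormedSpace.exp ((Complex.I * (α : ℂ)) • dotJ J θ) * J j *
          NormedSpace.exp ((-(Complex.I * (α : ℂ))) • dotJ J θ))
      = ((Real.sin (enorm' θ) / enorm' θ : ℝ) : ℂ) • J j
        + (((1 - Real.sin (enorm' θ) / enorm' θ) * (θ j / (enorm' θ) ^ 2) : ℝ) : ℂ) •
            dotJ J θ
        + ((2 * Real.sin (enorm' θ / 2) ^ 2 / (enorm' θ) ^ 2 : ℝ) : ℂ) •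
            dotJ J (crossProduct (Pi.single j 1) θ) := by
  set X := Complex.I • dotJ J θ
  set e : Fin 3 → ℝ := Pi.single j 1
  have hrot : ∀ α : ℝ, HasDerivAt (fun α => dotJCLM J (rodrigues θ α e))
      (X * dotJCLM J (rodrigues θ α e) - dotJCLM J (rodrigues θ α e) * X) α := fun α => by
    refine ((dotJCLM J).hasFDerivAt.comp_hasDerivAt α
      (hasDerivAt_rodrigues hθ e α)).congr_deriv ?_
    simp only [dotJCLM_apply, X, I_smul_dotJ_mul_sub_mul_dotJ J hcomm]
    exact dotJCLM_apply J _
  have hsmul : ∀ α : ℝ, (Complex.I * (α : ℂ)) • dotJ J θ = α • X := fun α => by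
    rw [mul_comm, mul_smul, Complex.coe_smul]
  have hconj : ∀ α : ℝ, exp ((Complex.I * (α : ℂ)) • dotJ J θ) * J j *
      exp ((-(Complex.I * (α : ℂ))) • dotJ J θ) = dotJCLM J (rodrigues θ α e) := fun α => by
    rw [← exp_smul_mul_mul_exp_neg_smul_of_hasDerivAt X hrot α, rodrigues_zero, dotJCLM_apply,
      dotJ_single, ← mul_neg, ← Complex.ofReal_neg, hsmul, hsmul]
    -- the two sides differ only in the instance providing the `ℝ`-action on matrices
    rfl
  have hint : IntervalIntegrable (fun α => rodrigues θ α e) MeasureTheory.volume 0 1 :=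
    (Differentiable.continuous fun α => (hasDerivAt_rodrigues hθ e α).differentiableAt)
      |>.intervalIntegrable 0 1
  calc _ = ∫ α in (0 : ℝ)..1, dotJCLM J (rodrigues θ α e) :=
        intervalIntegral.integral_congr fun α _ => hconj α
    _ = dotJCLM J (∫ α in (0 : ℝ)..1, rodrigues θ α e) :=
        (dotJCLM J).intervalIntegral_comp_comm hint
    _ = _ := by
      rw [integral_rodrigues hθ]
      simp only [e, map_add, map_smul, dotJCLM_apply, dotJ_single, dotProduct_single_one,
        ← Complex.coe_smul]
end

section
/- Let J₁, J₂, J₃ be Hermitian d×d complex matrices, ψ ∈ ℂ^d a unit vector, and c a real number such that ⟨J_i⟩_ψ = 0 for all i and ⟨J_iJ_l⟩_ψ = c·δ_{il} for all i, l. Define p₀ : ℝ³ → ℝ by p₀(θ) = |⟨ψ, exp(−i(θ₁J₁+θ₂J₂+θ₃J₃))ψ⟩|². Then p₀(θ) = 1 − c·‖θ‖² + o(‖θ‖²) as θ → 0; i.e., the function θ ↦ p₀(θ) − 1 + c‖θ‖² is o(‖θ‖²) at 0. -/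
/-!
To second order, `exp (-i θ·J) = 1 - i θ·J - (θ·J)² / 2 + O(‖θ‖³)`. The moment conditions
`⟨J_i⟩_ψ = 0` and `⟨J_i J_l⟩_ψ = c δ_{il}` turn this into
`⟨exp (-i θ·J)⟩_ψ = 1 - c‖θ‖² / 2 + O(‖θ‖³)`, and taking the squared modulus of
`1 - s + o(‖θ‖²)` with `s = O(‖θ‖²)` real gives `1 - 2s + o(‖θ‖²)`.
-/

open Matrix Asymptotics Filter Topology

section Exp

variable {𝕂 𝔸 : Type*} [RCLike 𝕂] [NormedRing 𝔸] [NormedAlgebra 𝕂 𝔸] [CompleteSpace 𝔸]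

theorem exp_sub_one_add_add_half_sq_isBigO :
    (fun y : 𝔸 => NormedSpace.exp y - (1 + y + (2⁻¹ : 𝕂) • y ^ 2)) =O[𝓝 0] fun y => ‖y‖ ^ 3 := by
  have hexp : HasFPowerSeriesAt NormedSpace.exp (NormedSpace.expSeries 𝕂 𝔸) 0 :=
    NormedSpace.hasFPowerSeriesAt_exp_zero_of_radius_pos <| by
      simp [NormedSpace.expSeries_radius_eq_top]
  have hpartial (y : 𝔸) :
      (NormedSpace.expSeries 𝕂 𝔸).partialSum 3 y = 1 + y + (2⁻¹ : 𝕂) • y ^ 2 := by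
    simp [FormalMultilinearSeries.partialSum, Finset.sum_range_succ,
      NormedSpace.expSeries_apply_eq, Nat.factorial]
  simpa only [zero_add, hpartial] using hexp.isBigO_sub_partialSum_pow 3

end Exp

theorem Complex.norm_sq_sub_one_sub_two_mul_isLittleO {α : Type*} {l : Filter α} {z : α → ℂ}
    {s t : α → ℝ} (ht : Tendsto t l (𝓝 0)) (hs : s =O[l] t)
    (hz : (fun x => z x - (1 - s x)) =o[l] t) :
    (fun x => ‖z x‖ ^ 2 - (1 - 2 * s x)) =o[l] t := by
  have hs' : (fun x => (s x : ℂ)) =O[l] t :=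
    (hs.norm_left.congr_left fun x => (Complex.norm_real _).symm).of_norm_left
  have hw : (fun x => z x - 1) =O[l] t := (hz.isBigO.sub hs').congr_left fun x => by ring
  have hw_sq : (fun x => ‖z x - 1‖ ^ 2) =o[l] t := by
    have hw_small := (isLittleO_one_iff ℝ).2 (hw.trans_tendsto ht)
    simpa [sq] using hw_small.norm_left.mul_isBigO hw.norm_left
  have hre : (fun x => (z x - (1 - s x)).re) =o[l] t := by
    refine (isBigO_of_le _ fun x => ?_).trans_isLittleO hz
    exact (Real.norm_eq_abs _).trans_le (Complex.abs_re_le_norm _)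
  -- `‖z‖² - (1 - 2s) = 2 Re (z - (1 - s)) + ‖z - 1‖²`
  refine ((hre.const_mul_left 2).add hw_sq).congr_left fun x => ?_
  simp only [Complex.sq_norm, Complex.normSq_apply, Complex.sub_re, Complex.sub_im,
    Complex.one_re, Complex.one_im, Complex.ofReal_re]
  ring

theorem EuclideanSpace.sum_ofReal_smul_isBigO {ι E : Type*} [Fintype ι]
    [SeminormedAddCommGroup E] [NormedSpace ℂ E] (J : ι → E) (l : Filter (EuclideanSpace ℝ ι)) :
    (fun θ : EuclideanSpace ℝ ι => ∑ i, (θ i : ℂ) • J i) =O[l] fun θ => θ := by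
  refine IsBigO.fun_sum fun i _ => isBigO_of_le' (c := ‖J i‖) _ fun θ => ?_
  rw [norm_smul, Complex.norm_real, mul_comm]
  exact mul_le_mul_of_nonneg_left (PiLp.norm_apply_le θ i) (norm_nonneg _)

namespace Matrix

variable {ι n : Type*} [Fintype ι] [Fintype n]

def expectation (ψ : n → ℂ) : Matrix n n ℂ →ₗ[ℂ] ℂ where
  toFun M := star ψ ⬝ᵥ (M *ᵥ ψ)
  map_add' M N := by rw [add_mulVec, dotProduct_add]
  map_smul' a M := by rw [smul_mulVec, dotProduct_smul]; rfl

theorem expectation_apply (ψ : n → ℂ) (M : Matrix n n ℂ) :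
    expectation ψ M = star ψ ⬝ᵥ (M *ᵥ ψ) := rfl

variable {J : ι → Matrix n n ℂ} {ψ : n → ℂ}

theorem expectation_sum_smul_eq_zero (h1 : ∀ i, expectation ψ (J i) = 0) (a : ι → ℂ) :
    expectation ψ (∑ i, a i • J i) = 0 := by
  simp [h1]

theorem expectation_sum_smul_sq [DecidableEq ι] [DecidableEq n] {c : ℂ}
    (h2 : ∀ i l, expectation ψ (J i * J l) = if i = l then c else 0) (a : ι → ℂ) :
    expectation ψ ((∑ i, a i • J i) ^ 2) = c * ∑ i, a i ^ 2 := by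
  rw [sq, Finset.sum_mul_sum]
  simp only [smul_mul_smul_comm, map_sum, map_smul, h2, smul_eq_mul, mul_ite, mul_zero,
    Finset.sum_ite_eq, Finset.mem_univ, if_true, Finset.mul_sum]
  exact Finset.sum_congr rfl fun i _ => by ring

-- Any submultiplicative norm does: `NormedSpace.exp` only sees the topology of `Matrix n n ℂ`.
attribute [local instance] Matrix.linftyOpNormedRing Matrix.linftyOpNormedAlgebra

theorem expectation_exp_sub_isBigO [DecidableEq ι] [DecidableEq n] (hψ : star ψ ⬝ᵥ ψ = 1)
    {c : ℝ} (h1 : ∀ i, star ψ ⬝ᵥ (J i *ᵥ ψ) = 0)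
    (h2 : ∀ i l, star ψ ⬝ᵥ ((J i * J l) *ᵥ ψ) = if i = l then (c : ℂ) else 0) :
    (fun θ : EuclideanSpace ℝ ι => star ψ ⬝ᵥ
        (NormedSpace.exp ((-Complex.I) • ∑ i, (θ i : ℂ) • J i) *ᵥ ψ)
        - (1 - (c / 2 * ‖θ‖ ^ 2 : ℝ)))
      =O[𝓝 0] fun θ => ‖θ‖ ^ 3 := by
  set A : EuclideanSpace ℝ ι → Matrix n n ℂ := fun θ => (-Complex.I) • ∑ i, (θ i : ℂ) • J i
  have hA : A =O[𝓝 0] fun θ => θ :=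
    (EuclideanSpace.sum_ofReal_smul_isBigO J _).const_smul_left (-Complex.I)
  have hexp := (exp_sub_one_add_add_half_sq_isBigO (𝕂 := ℂ)).comp_tendsto
    (hA.trans_tendsto tendsto_id)
  have hquad (θ : EuclideanSpace ℝ ι) :
      expectation ψ (1 + A θ + (2⁻¹ : ℂ) • A θ ^ 2) = 1 - (c / 2 * ‖θ‖ ^ 2 : ℝ) := by
    simp only [A, map_add, map_smul, smul_pow, expectation_sum_smul_eq_zero h1,
      expectation_sum_smul_sq h2]
    rw [expectation_apply, one_mulVec, hψ, EuclideanSpace.real_norm_sq_eq]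
    push_cast
    simp only [smul_eq_mul, neg_sq, Complex.I_sq]
    ring
  refine ((expectation ψ).toContinuousLinearMap.isBigO_comp _ _ |>.trans
    (hexp.trans (hA.norm_norm.pow 3))).congr_left fun θ => ?_
  change expectation ψ (_ - _) = _
  rw [map_sub, hquad]
  rfl

end Matrix

theorem probability_zero_outcome_expansion_general {d : ℕ}
    (J : Fin 3 → Matrix (Fin d) (Fin d) ℂ)
    (ψ : Fin d → ℂ) (hψ : star ψ ⬝ᵥ ψ = 1) (c : ℝ)
    (h1 : ∀ i, star ψ ⬝ᵥ (J i *ᵥ ψ) = 0)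
    (h2 : ∀ i l, star ψ ⬝ᵥ ((J i * J l) *ᵥ ψ) = if i = l then (c : ℂ) else 0)
    (p₀ : EuclideanSpace ℝ (Fin 3) → ℝ)
    (hp₀ : ∀ θ, p₀ θ = ‖(star ψ ⬝ᵥ
      ((NormedSpace.exp ((-Complex.I) • ∑ i, ((θ i : ℝ) : ℂ) • J i)) *ᵥ ψ))‖ ^ 2) :
    (fun θ : EuclideanSpace ℝ (Fin 3) => p₀ θ - (1 - c * ‖θ‖ ^ 2))
      =o[nhds 0] fun θ => ‖θ‖ ^ 2 := by
  have hsq : Tendsto (fun θ : EuclideanSpace ℝ (Fin 3) => ‖θ‖ ^ 2) (𝓝 0) (𝓝 0) := by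
    simpa using tendsto_norm_zero.pow 2
  have hcube : (fun θ : EuclideanSpace ℝ (Fin 3) => ‖θ‖ ^ 3) =o[𝓝 0] fun θ => ‖θ‖ ^ 2 :=
    (isLittleO_pow_pow (by norm_num)).comp_tendsto tendsto_norm_zero
  refine (Complex.norm_sq_sub_one_sub_two_mul_isLittleO (s := fun θ => c / 2 * ‖θ‖ ^ 2) hsq
    ((isBigO_refl _ _).const_mul_left _)
    ((expectation_exp_sub_isBigO hψ h1 h2).trans_isLittleO hcube)).congr_left fun θ => ?_
  rw [hp₀]
  ring

/-- Under the quantum metrology conditions `⟨J_i⟩ = 0` and `⟨J_i J_l⟩ = c δ_{il}`, the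
probability `p₀(θ) = |⟨ψ, exp(−i θ·J) ψ⟩|²` satisfies `p₀(θ) = 1 − c‖θ‖² + o(‖θ‖²)`
as `θ → 0`. -/
theorem probability_zero_outcome_expansion {d : ℕ}
    (J : Fin 3 → Matrix (Fin d) (Fin d) ℂ) (hJ : ∀ i, (J i).IsHermitian)
    (ψ : Fin d → ℂ) (hψ : star ψ ⬝ᵥ ψ = 1) (c : ℝ)
    (h1 : ∀ i, star ψ ⬝ᵥ (J i *ᵥ ψ) = 0)
    (h2 : ∀ i l, star ψ ⬝ᵥ ((J i * J l) *ᵥ ψ) = if i = l then (c : ℂ) else 0)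
    (p₀ : EuclideanSpace ℝ (Fin 3) → ℝ)
    (hp₀ : ∀ θ, p₀ θ = ‖(star ψ ⬝ᵥ
      ((NormedSpace.exp ((-Complex.I) • ∑ i, ((θ i : ℝ) : ℂ) • J i)) *ᵥ ψ))‖ ^ 2) :
    (fun θ : EuclideanSpace ℝ (Fin 3) => p₀ θ - (1 - c * ‖θ‖ ^ 2))
      =o[nhds 0] fun θ => ‖θ‖ ^ 2 :=
  probability_zero_outcome_expansion_general J ψ hψ c h1 h2 p₀ hp₀
end

section
/- Let J₁, J₂, J₃ be Hermitian d×d complex matrices, ψ ∈ ℂ^d a unit vector, and c > 0 a real number such that ⟨J_i⟩_ψ = 0 for all i and ⟨J_iJ_l⟩_ψ = c·δ_{il} for all i, l. For i = 1,2,3 define p_i : ℝ³ → ℝ by p_i(θ) = |⟨J_iψ, exp(−i(θ₁J₁+θ₂J₂+θ₃J₃))ψ⟩|²/‖J_iψ‖² (note ‖J_iψ‖² = c > 0). Then p_i(θ) = c·θ_i² + o(‖θ‖²) as θ → 0; i.e., θ ↦ p_i(θ) − c·θ_i² is o(‖θ‖²) at 0. -/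
/-!
With `A(θ) = -i(θ₁J₁ + θ₂J₂ + θ₃J₃)` linear in `θ`, the amplitude is `⟨J_iψ, exp(A(θ))ψ⟩`.
Since `exp` has derivative `1` at `0`, it equals `⟨J_iψ, ψ⟩ + ⟨J_iψ, A(θ)ψ⟩ + o(‖θ‖)`, and the
metrology conditions turn this into `-i c θ_i + o(‖θ‖)`; the denominator `‖J_iψ‖²` is `c`.
Squared moduli of two quantities that are `O(‖θ‖)` and `o(‖θ‖)`-close differ by `o(‖θ‖²)`.
-/

open Matrix Asymptotics

-- Any norm would do; this one makes square matrices a normed algebra.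
attribute [local instance] Matrix.linftyOpNormedRing Matrix.linftyOpNormedAlgebra
  Matrix.linftyOpNormedAddCommGroup

theorem Asymptotics.IsLittleO.norm_sq_sub_norm_sq {α E : Type*} [SeminormedAddCommGroup E]
    {l : Filter α} {f g : α → E} {u : α → ℝ} (hfg : (fun x => f x - g x) =o[l] u)
    (hg : g =O[l] u) : (fun x => ‖f x‖ ^ 2 - ‖g x‖ ^ 2) =o[l] fun x => u x ^ 2 := by
  have hdiff : (fun x => ‖f x‖ - ‖g x‖) =o[l] u :=
    (isBigO_of_le l fun x => by simpa using abs_norm_sub_norm_le (f x) (g x)).trans_isLittleO hfg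
  have hf : f =O[l] u := by simpa using hfg.isBigO.add hg
  have hsum : (fun x => ‖f x‖ + ‖g x‖) =O[l] u := hf.norm_left.add hg.norm_left
  exact (hdiff.mul_isBigO hsum).congr (fun x => by ring) (fun x => by ring)

theorem isLittleO_apply_exp_sub_apply {E 𝔸 F : Type*} [NormedAddCommGroup E] [NormedSpace ℝ E]
    [NormedRing 𝔸] [NormedAlgebra ℝ 𝔸] [CompleteSpace 𝔸] [NormedAddCommGroup F]
    [NormedSpace ℝ F] (Φ : E →L[ℝ] 𝔸) (ℓ : 𝔸 →L[ℝ] F) (hℓ : ℓ 1 = 0) :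
    (fun θ => ℓ (NormedSpace.exp (Φ θ)) - ℓ (Φ θ)) =o[nhds 0] fun θ => θ := by
  have hexp : HasFDerivAt NormedSpace.exp (1 : 𝔸 →L[ℝ] 𝔸) (Φ 0) := by
    simpa using hasFDerivAt_exp_zero (𝕂 := ℝ) (𝔸 := 𝔸)
  have h : HasFDerivAt (fun θ => ℓ (NormedSpace.exp (Φ θ))) (ℓ.comp Φ) 0 := by
    simpa [Function.comp_def, ContinuousLinearMap.one_def] using
      ℓ.hasFDerivAt.comp 0 (hexp.comp 0 Φ.hasFDerivAt)
  simpa [hℓ] using h.isLittleO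

namespace Matrix

theorem star_mulVec_dotProduct_mulVec {n R : Type*} [Fintype n] [CommRing R] [StarRing R]
    (A B : Matrix n n R) (x y : n → R) :
    star (A *ᵥ x) ⬝ᵥ (B *ᵥ y) = star x ⬝ᵥ ((Aᴴ * B) *ᵥ y) := by
  rw [star_mulVec, dotProduct_mulVec, dotProduct_mulVec, vecMul_vecMul]

noncomputable def phaseGenerator {ι n : Type*} [Fintype ι] (J : ι → Matrix n n ℂ) :
    EuclideanSpace ℝ ι →L[ℝ] Matrix n n ℂ :=
  LinearMap.toContinuousLinearMap
    { toFun θ := (-Complex.I) • ∑ k, ((θ k : ℝ) : ℂ) • J k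
      map_add' θ η := by simp [add_smul, Finset.sum_add_distrib]
      map_smul' r θ := by
        simp only [PiLp.smul_apply, smul_eq_mul, Complex.ofReal_mul, mul_smul, Finset.smul_sum,
          RingHom.id_apply, ← Complex.coe_smul, smul_comm (-Complex.I)] }

theorem phaseGenerator_apply {ι n : Type*} [Fintype ι] (J : ι → Matrix n n ℂ)
    (θ : EuclideanSpace ℝ ι) :
    phaseGenerator J θ = (-Complex.I) • ∑ k, ((θ k : ℝ) : ℂ) • J k :=
  rfl

noncomputable def matrixElement {n : Type*} [Fintype n] (v w : n → ℂ) :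
    Matrix n n ℂ →L[ℝ] ℂ :=
  LinearMap.toContinuousLinearMap
    { toFun N := star v ⬝ᵥ (N *ᵥ w)
      map_add' M N := by simp [add_mulVec]
      map_smul' r N := by simp [smul_mulVec] }

theorem matrixElement_apply {n : Type*} [Fintype n] (v w : n → ℂ) (N : Matrix n n ℂ) :
    matrixElement v w N = star v ⬝ᵥ (N *ᵥ w) :=
  rfl

end Matrix

theorem probability_Pi_outcome_expansion_general {d : ℕ}
    (J : Fin 3 → Matrix (Fin d) (Fin d) ℂ) (hJ : ∀ i, (J i).IsHermitian)
    (ψ : Fin d → ℂ) (c : ℝ) (hc : 0 < c)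
    (h1 : ∀ i, star ψ ⬝ᵥ (J i *ᵥ ψ) = 0)
    (h2 : ∀ i l, star ψ ⬝ᵥ ((J i * J l) *ᵥ ψ) = if i = l then (c : ℂ) else 0)
    (i : Fin 3) (p : EuclideanSpace ℝ (Fin 3) → ℝ)
    (hp : ∀ θ, p θ = ‖(star (J i *ᵥ ψ) ⬝ᵥ
        ((NormedSpace.exp ((-Complex.I) • ∑ k, ((θ k : ℝ) : ℂ) • J k)) *ᵥ ψ))‖ ^ 2
      / (∑ a, Complex.normSq ((J i *ᵥ ψ) a))) :
    (fun θ : EuclideanSpace ℝ (Fin 3) => p θ - c * (θ i) ^ 2)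
      =o[nhds 0] fun θ => ‖θ‖ ^ 2 := by
  have : CompleteSpace (Matrix (Fin d) (Fin d) ℂ) := FiniteDimensional.complete ℂ _
  set Φ := phaseGenerator J
  set ℓ := matrixElement (J i *ᵥ ψ) ψ
  have hℓ : ∀ N, ℓ N = star ψ ⬝ᵥ ((J i * N) *ᵥ ψ) := fun N => by
    rw [matrixElement_apply, star_mulVec_dotProduct_mulVec, (hJ i).eq]
  have hℓ1 : ℓ 1 = 0 := by simpa [hℓ] using h1 i
  have hℓΦ : ∀ θ, ℓ (Φ θ) = -Complex.I * c * θ i := fun θ => by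
    rw [hℓ, phaseGenerator_apply, Matrix.mul_smul, smul_mulVec, dotProduct_smul, Matrix.mul_sum,
      sum_mulVec, dotProduct_sum]
    simp_rw [Matrix.mul_smul, smul_mulVec, dotProduct_smul, h2]
    simp only [smul_eq_mul, mul_ite, mul_zero, Finset.sum_ite_eq, Finset.mem_univ, if_true]
    ring
  have hden : ∑ a, Complex.normSq ((J i *ᵥ ψ) a) = c := by
    have h := hℓ (J i)
    rw [h2 i i, if_pos rfl, matrixElement_apply] at h
    simp [dotProduct, Complex.mul_conj, mul_comm] at h
    exact_mod_cast h
  have hpθ : ∀ θ, p θ - c * θ i ^ 2 = c⁻¹ * (‖ℓ (NormedSpace.exp (Φ θ))‖ ^ 2 - ‖ℓ (Φ θ)‖ ^ 2) :=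
    fun θ => by
      rw [hp θ, hden, hℓΦ, norm_mul, norm_mul, norm_neg, Complex.norm_I, Complex.norm_real,
        Complex.norm_real, Real.norm_of_nonneg hc.le, Real.norm_eq_abs, one_mul, mul_pow, sq_abs,
        matrixElement_apply, phaseGenerator_apply]
      field_simp
  refine IsLittleO.congr_left ?_ fun θ => (hpθ θ).symm
  exact ((isLittleO_apply_exp_sub_apply Φ ℓ hℓ1).norm_right.norm_sq_sub_norm_sq
    ((ℓ.comp Φ).isBigO_id _).norm_right).const_mul_left c⁻¹

/-- Under the quantum metrology conditions `⟨J_i⟩ = 0` and `⟨J_i J_l⟩ = c δ_{il}` with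
`c > 0`, the probability `p_i(θ) = |⟨J_i ψ, exp(−i θ·J) ψ⟩|²/‖J_i ψ‖²` satisfies
`p_i(θ) = c θ_i² + o(‖θ‖²)` as `θ → 0`. -/
theorem probability_Pi_outcome_expansion {d : ℕ}
    (J : Fin 3 → Matrix (Fin d) (Fin d) ℂ) (hJ : ∀ i, (J i).IsHermitian)
    (ψ : Fin d → ℂ) (hψ : star ψ ⬝ᵥ ψ = 1) (c : ℝ) (hc : 0 < c)
    (h1 : ∀ i, star ψ ⬝ᵥ (J i *ᵥ ψ) = 0)
    (h2 : ∀ i l, star ψ ⬝ᵥ ((J i * J l) *ᵥ ψ) = if i = l then (c : ℂ) else 0)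
    (i : Fin 3) (p : EuclideanSpace ℝ (Fin 3) → ℝ)
    (hp : ∀ θ, p θ = ‖(star (J i *ᵥ ψ) ⬝ᵥ
        ((NormedSpace.exp ((-Complex.I) • ∑ k, ((θ k : ℝ) : ℂ) • J k)) *ᵥ ψ))‖ ^ 2
      / (∑ a, Complex.normSq ((J i *ᵥ ψ) a))) :
    (fun θ : EuclideanSpace ℝ (Fin 3) => p θ - c * (θ i) ^ 2)
      =o[nhds 0] fun θ => ‖θ‖ ^ 2 :=
  probability_Pi_outcome_expansion_general J hJ ψ c hc h1 h2 i p hp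
end
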